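/- In the simplicial-complex game SimNim(Δ), if C is a circuit of Δ (a minimal non-face: C ∉ Δ but every proper subset of C is in Δ), then for every natural number n, the position n·e(C) (which has n tokens on each vertex of C and 0 elsewhere) is a P-position. -/

import Mathlib

/-!
A move from `n • e(C)` is played on a face, which cannot contain the circuit `C`; so it leaves
some stack of `C` at `n` while lowering another. The opponent answers by lowering every stack of
`C` to the smallest one: this only touches `C` minus a vertex holding the minimum, a proper
subset of `C` and hence a face. So the positions `m • e(C)` can always be returned to, and the
player who moves to them wins.
-/

/-- A legal move in SetNim: at least one stack strictly decreases, all changed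
stacks lie in some allowed move set, stacks weakly decrease. -/
def Move {V : Type} (A : Set (Set V)) (p q : V → ℕ) : Prop :=
  q ≠ p ∧ (∀ i, q i ≤ p i) ∧ ∃ a ∈ A, ∀ i, q i ≠ p i → i ∈ a

/-- P-positions: positions all of whose options are N-positions. -/
def PPos {V : Type} [Fintype V] (A : Set (Set V)) (p : V → ℕ) : Prop :=
  ∀ q, Move A p q → ¬ PPos A q
termination_by Finset.univ.sum p
decreasing_by
  rename_i hq
  obtain ⟨hne, hle, -⟩ := hq
  refine Finset.sum_lt_sum (fun i _ => hle i) ?_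
  obtain ⟨i, hi⟩ := Function.ne_iff.mp hne
  exact ⟨i, Finset.mem_univ i, lt_of_le_of_ne (hle i) hi⟩

open Finset

variable {V : Type}

theorem PPos_iff [Fintype V] (A : Set (Set V)) (p : V → ℕ) :
    PPos A p ↔ ∀ q, Move A p q → ¬ PPos A q := by
  rw [PPos]

namespace Move

variable {A : Set (Set V)} {p q : V → ℕ}

theorem exists_lt (h : Move A p q) : ∃ v, q v < p v := by
  obtain ⟨hne, hle, -⟩ := h
  obtain ⟨v, hv⟩ := Function.ne_iff.mp hne
  exact ⟨v, (hle v).lt_of_ne hv⟩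

theorem sum_lt [Fintype V] (h : Move A p q) : ∑ v, q v < ∑ v, p v := by
  obtain ⟨v, hv⟩ := h.exists_lt
  exact sum_lt_sum (fun v _ => h.2.1 v) ⟨v, mem_univ v, hv⟩

theorem exists_eq_of_not_subset {C : Set V} (h : Move A p q) (hC : ∀ a ∈ A, ¬ C ⊆ a) :
    ∃ v ∈ C, q v = p v := by
  obtain ⟨-, -, a, ha, hsupp⟩ := h
  by_contra! hne
  exact hC a ha fun v hv => hsupp v (hne v hv)

end Move

theorem PPos_of_forall_move_exists_move [Fintype V] {A : Set (Set V)} {S : Set (V → ℕ)}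
    (hS : ∀ p ∈ S, ∀ q, Move A p q → ∃ r ∈ S, Move A q r) {p : V → ℕ} (hp : p ∈ S) :
    PPos A p := by
  induction hsum : ∑ v, p v using Nat.strong_induction_on generalizing p with
  | _ k ih =>
  rw [PPos_iff]
  intro q hpq hq
  obtain ⟨r, hrS, hqr⟩ := hS p hp q hpq
  rw [PPos_iff] at hq
  exact hq r hqr (ih _ (hsum ▸ hqr.sum_lt.trans hpq.sum_lt) hrS rfl)

section Circuit

variable [DecidableEq V] {A : Set (Set V)} {C : Finset V}

def uniformOn (C : Finset V) (n : ℕ) : V → ℕ := fun v => if v ∈ C then n else 0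

theorem move_uniformOn_of_isMin (hA : ∀ w ∈ C, (↑(C.erase w) : Set V) ∈ A) {q : V → ℕ}
    (hq : ∀ v ∉ C, q v = 0) {w₀ u : V} (hw₀ : w₀ ∈ C) (hmin : ∀ v ∈ C, q w₀ ≤ q v)
    (hu : u ∈ C) (hlt : q w₀ < q u) :
    Move A q (uniformOn C (q w₀)) := by
  refine ⟨fun h => ?_, fun v => ?_, _, hA w₀ hw₀, fun v hv => ?_⟩
  · have hqu := congrFun h u
    simp only [uniformOn, hu, if_true] at hqu
    omega
  · by_cases hv : v ∈ C
    · simpa [uniformOn, hv] using hmin v hv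
    · simp [uniformOn, hv, hq v hv]
  · have hvC : v ∈ C := by
      by_contra hvC
      exact hv (by simp [uniformOn, hvC, hq v hvC])
    refine mem_erase.2 ⟨?_, hvC⟩
    rintro rfl
    simp [uniformOn, hvC] at hv

theorem exists_move_uniformOn_of_move (hnot : ∀ a ∈ A, ¬ (↑C : Set V) ⊆ a)
    (herase : ∀ w ∈ C, (↑(C.erase w) : Set V) ∈ A) {n : ℕ} {q : V → ℕ}
    (h : Move A (uniformOn C n) q) : ∃ m, Move A q (uniformOn C m) := by
  obtain ⟨u, huC, hqu⟩ := h.exists_eq_of_not_subset hnot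
  rw [mem_coe] at huC
  obtain ⟨w, hw⟩ := h.exists_lt
  have hq : ∀ v ∉ C, q v = 0 := fun v hv => by simpa [uniformOn, hv] using h.2.1 v
  have hwC : w ∈ C := by
    by_contra hwC
    simp [uniformOn, hwC] at hw
  obtain ⟨w₀, hw₀C, hmin⟩ := C.exists_min_image q ⟨w, hwC⟩
  refine ⟨q w₀, move_uniformOn_of_isMin herase hq hw₀C hmin huC ?_⟩
  have hw₀w := hmin w hwC
  simp only [uniformOn, hwC, huC, if_true] at hw hqu
  omega

end Circuit

theorem simNim_circuit_ppos {V : Type} [Fintype V] [DecidableEq V]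
    (Δ : Set (Finset V))
    (hdown : ∀ F ∈ Δ, ∀ G : Finset V, G ⊆ F → G ∈ Δ)
    (C : Finset V) (hC1 : C ∉ Δ) (hC2 : ∀ G : Finset V, G ⊂ C → G ∈ Δ)
    (n : ℕ) :
    PPos {s : Set V | ∃ F ∈ Δ, s = ↑F} (fun v => if v ∈ C then n else 0) := by
  have hnot : ∀ a ∈ {s : Set V | ∃ F ∈ Δ, s = ↑F}, ¬ (↑C : Set V) ⊆ a := by
    rintro _ ⟨F, hF, rfl⟩ hCF
    exact hC1 (hdown F hF C (coe_subset.1 hCF))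
  have herase : ∀ w ∈ C, (↑(C.erase w) : Set V) ∈ {s : Set V | ∃ F ∈ Δ, s = ↑F} :=
    fun w hw => ⟨_, hC2 _ (erase_ssubset hw), rfl⟩
  refine PPos_of_forall_move_exists_move (S := Set.range (uniformOn C)) ?_ ⟨n, rfl⟩
  rintro _ ⟨m, rfl⟩ q hq
  obtain ⟨k, hk⟩ := exists_move_uniformOn_of_move hnot herase hq
  exact ⟨_, ⟨k, rfl⟩, hk⟩
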